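/- arXiv:2312.11022 — 2 statements merged into one kernel-verified Lean document; each statement's English description precedes it below -/
import Mathlib

section
/- Let G, H : ℝⁿ → ℝᵐ be differentiable at a point w feasible for an MPCC. Then the tangent cone of the MPCC feasible set at w is contained in the MPCC-linearized feasible cone F^MPCC at w, i.e. every tangent direction d satisfies: ∇gᵢ(w)ᵀd = 0 for equality constraints, ∇hᵢ(w)ᵀd ≥ 0 for active inequalities, ∇Gᵢ(w)ᵀd = 0 for i with Gᵢ(w)=0 < Hᵢ(w), ∇Hᵢ(w)ᵀd = 0 for i with Hᵢ(w)=0 < Gᵢ(w), and 0 ≤ ∇Gᵢ(w)ᵀd ⊥ ∇Hᵢ(w)ᵀd ≥ 0 for biactive i. -/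
/-!
Every direction in `tangentCone'` is a positive tangent direction in Mathlib's sense, so Fermat's
rule on `Ω` applies: a function that vanishes at `w` and is nonnegative on `Ω` has nonnegative
derivative along `d`, and one that vanishes on `Ω` near `w` has zero derivative along `d`. If
`0 < H i w`, then `H i` stays positive near `w`, so complementarity forces `G i = 0` on `Ω` there.
For a biactive index, `Ω ⊆ {G i = 0} ∪ {H i = 0}`, and the tangent cone of a union is the union of
the tangent cones, so `d` is tangent to a level set along which one of the two derivatives vanishes.
-/

open Filter Topology

def tangentCone' {E : Type*} [NormedAddCommGroup E] [NormedSpace ℝ E]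
    (Ω : Set E) (w : E) : Set E :=
  {d | ∃ (wk : ℕ → E) (tk : ℕ → ℝ),
    (∀ k, wk k ∈ Ω) ∧ (∀ k, 0 < tk k) ∧
    Tendsto wk atTop (𝓝 w) ∧ Tendsto tk atTop (𝓝 0) ∧
    Tendsto (fun k => (tk k)⁻¹ • (wk k - w)) atTop (𝓝 d)}

open Set
open scoped NNReal

theorem tangentConeAt_union {R E : Type*} [AddCommGroup E] [SMul R E] [TopologicalSpace E]
    (s t : Set E) (x : E) :
    tangentConeAt R (s ∪ t) x = tangentConeAt R s x ∪ tangentConeAt R t x := by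
  ext y
  simp only [tangentConeAt_def, preimage_union, nhdsWithin_union, ← map₂_smul, map₂_sup_right,
    clusterPt_sup, mem_union, mem_ofPred_eq]

theorem eventually_nhdsWithin_eq_zero_of_eq_zero_or_eq_zero {X M : Type*} [TopologicalSpace X]
    [Zero M] [TopologicalSpace M] [T1Space M] {f g : X → M} {s : Set X} {a : X}
    (hfg : ∀ x ∈ s, f x = 0 ∨ g x = 0) (hg : ContinuousAt g a) (hga : g a ≠ 0) :
    ∀ᶠ x in 𝓝[s] a, f x = 0 := by
  filter_upwards [nhdsWithin_le_nhds (hg.eventually_ne hga), self_mem_nhdsWithin] with x hgx hx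
  exact (hfg x hx).resolve_right hgx

section Fermat

variable {E : Type*} [NormedAddCommGroup E] [NormedSpace ℝ E] {s : Set E} {a y : E}
  {f g : E → ℝ}

theorem tangentCone'_subset_posTangentConeAt (s : Set E) (a : E) :
    tangentCone' s a ⊆ posTangentConeAt s a := by
  rintro y ⟨x, t, hxs, ht, hxa, -, hty⟩
  exact mem_tangentConeAt_of_seq atTop (fun k => ⟨(t k)⁻¹, (inv_pos.2 (ht k)).le⟩)
    (fun k => x k - a) (by simpa using hxa.sub_const a) (.of_forall fun k => by simpa using hxs k)
    hty

theorem fderiv_apply_nonneg_of_nonneg_on (hf : DifferentiableAt ℝ f a)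
    (hs : ∀ x ∈ s, 0 ≤ f x) (ha : f a = 0) (hy : y ∈ posTangentConeAt s a) :
    0 ≤ fderiv ℝ f a y :=
  IsLocalMinOn.hasFDerivWithinAt_nonneg (eventually_mem_nhdsWithin.mono fun x hx => ha ▸ hs x hx)
    hf.hasFDerivAt.hasFDerivWithinAt hy

theorem fderiv_apply_eq_zero_of_eventually_eq_zero (hf : DifferentiableAt ℝ f a)
    (hs : ∀ᶠ x in 𝓝[s] a, f x = 0) (ha : f a = 0) (hy : y ∈ posTangentConeAt s a) :
    fderiv ℝ f a y = 0 :=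
  le_antisymm
    (IsLocalMaxOn.hasFDerivWithinAt_nonpos (hs.mono fun _ hx => (hx.trans ha.symm).le)
      hf.hasFDerivAt.hasFDerivWithinAt hy)
    (IsLocalMinOn.hasFDerivWithinAt_nonneg (hs.mono fun _ hx => (hx.trans ha.symm).ge)
      hf.hasFDerivAt.hasFDerivWithinAt hy)

theorem fderiv_apply_mul_fderiv_apply_eq_zero (hf : DifferentiableAt ℝ f a)
    (hg : DifferentiableAt ℝ g a) (hfa : f a = 0) (hga : g a = 0)
    (hs : ∀ x ∈ s, f x = 0 ∨ g x = 0) (hy : y ∈ posTangentConeAt s a) :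
    fderiv ℝ f a y * fderiv ℝ g a y = 0 := by
  have hy' : y ∈ posTangentConeAt ({x | f x = 0} ∪ {x | g x = 0}) a := tangentConeAt_mono hs hy
  rcases (tangentConeAt_union (R := ℝ≥0) _ _ a).subset hy' with hy' | hy'
  · rw [fderiv_apply_eq_zero_of_eventually_eq_zero hf eventually_mem_nhdsWithin hfa hy', zero_mul]
  · rw [fderiv_apply_eq_zero_of_eventually_eq_zero hg eventually_mem_nhdsWithin hga hy', mul_zero]

end Fermat

/-- The tangent cone of the MPCC feasible set is contained in the MPCC-linearized
feasible cone. -/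
theorem tangentCone_subset_MPCC_linearized_cone
    {n ng nh m : ℕ}
    (g : Fin ng → EuclideanSpace ℝ (Fin n) → ℝ)
    (h : Fin nh → EuclideanSpace ℝ (Fin n) → ℝ)
    (G H : Fin m → EuclideanSpace ℝ (Fin n) → ℝ)
    (w : EuclideanSpace ℝ (Fin n))
    (Ω : Set (EuclideanSpace ℝ (Fin n)))
    (hΩ : Ω = {v | (∀ i, g i v = 0) ∧ (∀ i, 0 ≤ h i v) ∧
        (∀ i, 0 ≤ G i v) ∧ (∀ i, 0 ≤ H i v) ∧ (∀ i, G i v * H i v ≤ 0)})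
    (hwΩ : w ∈ Ω)
    (hg : ∀ i, DifferentiableAt ℝ (g i) w)
    (hh : ∀ i, DifferentiableAt ℝ (h i) w)
    (hG : ∀ i, DifferentiableAt ℝ (G i) w)
    (hH : ∀ i, DifferentiableAt ℝ (H i) w)
    (d : EuclideanSpace ℝ (Fin n)) (hd : d ∈ tangentCone' Ω w) :
    (∀ i, fderiv ℝ (g i) w d = 0) ∧
    (∀ i, h i w = 0 → 0 ≤ fderiv ℝ (h i) w d) ∧
    (∀ i, G i w = 0 → 0 < H i w → fderiv ℝ (G i) w d = 0) ∧
    (∀ i, H i w = 0 → 0 < G i w → fderiv ℝ (H i) w d = 0) ∧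
    (∀ i, G i w = 0 → H i w = 0 →
      0 ≤ fderiv ℝ (G i) w d ∧ 0 ≤ fderiv ℝ (H i) w d ∧
      fderiv ℝ (G i) w d * fderiv ℝ (H i) w d = 0) := by
  replace hd := tangentCone'_subset_posTangentConeAt Ω w hd
  have hcompl (i) : ∀ v ∈ Ω, G i v = 0 ∨ H i v = 0 := fun v hv =>
    have hv := hΩ.subset hv
    mul_eq_zero.1 <| le_antisymm (hv.2.2.2.2 i) (mul_nonneg (hv.2.2.1 i) (hv.2.2.2.1 i))
  refine ⟨fun i => ?_, fun i hi => ?_, fun i hGi hHi => ?_, fun i hHi hGi => ?_,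
    fun i hGi hHi => ⟨?_, ?_, ?_⟩⟩
  · exact fderiv_apply_eq_zero_of_eventually_eq_zero (hg i)
      (eventually_mem_nhdsWithin.mono fun v hv => (hΩ.subset hv).1 i) ((hΩ.subset hwΩ).1 i) hd
  · exact fderiv_apply_nonneg_of_nonneg_on (hh i) (fun v hv => (hΩ.subset hv).2.1 i) hi hd
  · exact fderiv_apply_eq_zero_of_eventually_eq_zero (hG i)
      (eventually_nhdsWithin_eq_zero_of_eq_zero_or_eq_zero (hcompl i) (hH i).continuousAt hHi.ne')
      hGi hd
  · exact fderiv_apply_eq_zero_of_eventually_eq_zero (hH i)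
      (eventually_nhdsWithin_eq_zero_of_eq_zero_or_eq_zero (fun v hv => (hcompl i v hv).symm)
        (hG i).continuousAt hGi.ne') hHi hd
  · exact fderiv_apply_nonneg_of_nonneg_on (hG i) (fun v hv => (hΩ.subset hv).2.2.1 i) hGi hd
  · exact fderiv_apply_nonneg_of_nonneg_on (hH i) (fun v hv => (hΩ.subset hv).2.2.2.1 i) hHi hd
  · exact fderiv_apply_mul_fderiv_apply_eq_zero (hG i) (hH i) hGi hHi (hcompl i) hd
end

section
/- The Kanzow–Schwartz function φ_KS(y₁,y₂) defined by φ_KS(y₁,y₂) = y₁y₂ if y₁ + y₂ ≥ 0 and φ_KS(y₁,y₂) = -(y₁² + y₂²)/2 if y₁ + y₂ < 0 is continuously differentiable on ℝ², and φ_KS(a,b) = 0 if and only if a ≥ 0, b ≥ 0, ab = 0. -/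
/-- The Kanzow–Schwartz C-function. -/
noncomputable def phiKS (y₁ y₂ : ℝ) : ℝ :=
  if 0 ≤ y₁ + y₂ then y₁ * y₂ else -(y₁ ^ 2 + y₂ ^ 2) / 2

/-!
Since `y₁ y₂ = ((y₁ + y₂)² - y₁² - y₂²)/2`, both branches combine to
`φ_KS = (max(y₁ + y₂, 0)² - y₁² - y₂²)/2`, and the squared positive part `t ↦ max(t, 0)²` is `C¹`
with derivative `2 max(t, 0)`. For the NCP property, `φ_KS < 0` wherever `y₁ + y₂ < 0`.
-/

open Set Filter Topology

theorem hasDerivAt_max_zero_sq (s : ℝ) :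
    HasDerivAt (fun t : ℝ => max t 0 ^ 2) (2 * max s 0) s := by
  rcases lt_trichotomy s 0 with hs | rfl | hs
  · have hzero : (fun t : ℝ => max t 0 ^ 2) =ᶠ[𝓝 s] fun _ => 0 := by
      filter_upwards [eventually_lt_nhds hs] with t ht
      simp [ht.le]
    simpa [hs.le] using (hasDerivAt_const s (0 : ℝ)).congr_of_eventuallyEq hzero
  · have hleft : HasDerivWithinAt (fun t : ℝ => max t 0 ^ 2) 0 (Iic 0) 0 :=
      (hasDerivWithinAt_const 0 _ 0).congr_of_mem (fun t ht => by simp [mem_Iic.mp ht])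
        self_mem_Iic
    have hright : HasDerivWithinAt (fun t : ℝ => max t 0 ^ 2) 0 (Ici 0) 0 := by
      simpa using (hasDerivAt_pow 2 (0 : ℝ)).hasDerivWithinAt.congr_of_mem
        (fun t ht => by simp [mem_Ici.mp ht]) self_mem_Ici
    simpa [Iic_union_Ici] using hleft.union hright
  · have hsq : (fun t : ℝ => max t 0 ^ 2) =ᶠ[𝓝 s] fun t => t ^ 2 := by
      filter_upwards [eventually_gt_nhds hs] with t ht
      simp [ht.le]
    simpa [hs.le] using (hasDerivAt_pow 2 s).congr_of_eventuallyEq hsq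

theorem contDiff_max_zero_sq : ContDiff ℝ 1 (fun t : ℝ => max t 0 ^ 2) := by
  rw [contDiff_one_iff_deriv]
  refine ⟨fun s => (hasDerivAt_max_zero_sq s).differentiableAt, ?_⟩
  rw [funext fun s => (hasDerivAt_max_zero_sq s).deriv]
  fun_prop

theorem phiKS_eq_max_zero_sq (y₁ y₂ : ℝ) :
    phiKS y₁ y₂ = (max (y₁ + y₂) 0 ^ 2 - y₁ ^ 2 - y₂ ^ 2) / 2 := by
  unfold phiKS
  split_ifs with h
  · rw [max_eq_left h]; ring
  · rw [max_eq_right (not_le.mp h).le]; ring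

theorem contDiff_phiKS : ContDiff ℝ 1 (fun p : ℝ × ℝ => phiKS p.1 p.2) := by
  simp only [phiKS_eq_max_zero_sq]
  exact (((contDiff_max_zero_sq.comp (contDiff_fst.add contDiff_snd)).sub
    (contDiff_fst.pow 2)).sub (contDiff_snd.pow 2)).div_const 2

theorem phiKS_eq_zero_iff (a b : ℝ) : phiKS a b = 0 ↔ 0 ≤ a ∧ 0 ≤ b ∧ a * b = 0 := by
  unfold phiKS
  split_ifs with hsum
  · constructor
    · intro hab
      rcases mul_eq_zero.mp hab with rfl | rfl <;> simp_all
    · exact fun h => h.2.2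
  · constructor
    · intro h
      have hneg : a + b < 0 := not_le.mp hsum
      -- `2 (a² + b²) ≥ (a + b)² > 0`
      nlinarith [sq_nonneg (a - b), mul_pos_of_neg_of_neg hneg hneg]
    · rintro ⟨ha, hb, -⟩
      linarith

/-- The Kanzow–Schwartz function is continuously differentiable on `ℝ²` and is an
NCP function: `φ_KS(a,b) = 0` iff `a ≥ 0`, `b ≥ 0`, `ab = 0`. -/
theorem kanzow_schwartz_properties :
    ContDiff ℝ 1 (fun p : ℝ × ℝ => phiKS p.1 p.2) ∧
    (∀ a b : ℝ, phiKS a b = 0 ↔ (0 ≤ a ∧ 0 ≤ b ∧ a * b = 0)) :=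
  ⟨contDiff_phiKS, phiKS_eq_zero_iff⟩
end
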